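/- For all real numbers δ > 0 and c > 0, ∫₀^∞ e^{-x}(1+δx)^{-1} dx ≥ e^{-c}·δ⁻¹·log(1+δc). -/

import Mathlib

open MeasureTheory Real Set

lemma intervalIntegral_inv_one_add_mul {δ c : ℝ} (hδ : δ ≠ 0) (hc : 0 < 1 + δ * c) :
    ∫ x in (0 : ℝ)..c, (1 + δ * x)⁻¹ = δ⁻¹ * log (1 + δ * c) := by
  have h := intervalIntegral.integral_comp_mul_add (a := 0) (b := c) (fun x : ℝ => x⁻¹) hδ 1
  simp only [mul_zero, zero_add, smul_eq_mul, add_comm (δ * _) 1] at h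
  rw [h, integral_inv_of_pos one_pos (by linarith), div_one]

lemma integrableOn_exp_neg_mul_inv_one_add_mul {δ : ℝ} (hδ : 0 ≤ δ) :
    IntegrableOn (fun x => exp (-x) * (1 + δ * x)⁻¹) (Ioi 0) := by
  refine (integrableOn_exp_neg_Ioi 0).mul_bdd (c := 1) (by fun_prop) ?_
  filter_upwards [self_mem_ae_restrict measurableSet_Ioi] with x (hx : 0 < x)
  have : 1 ≤ 1 + δ * x := by nlinarith
  rw [norm_inv, Real.norm_of_nonneg (by linarith)]
  exact inv_le_one_of_one_le₀ this

lemma exp_neg_mul_intervalIntegral_le_setIntegral_Ioi {g : ℝ → ℝ} {c : ℝ} (hc : 0 ≤ c)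
    (hg_nonneg : ∀ x, 0 < x → 0 ≤ g x) (hg : IntervalIntegrable g volume 0 c)
    (hint : IntegrableOn (fun x => exp (-x) * g x) (Ioi 0)) :
    exp (-c) * ∫ x in (0 : ℝ)..c, g x ≤ ∫ x in Ioi 0, exp (-x) * g x := by
  rw [intervalIntegral.integral_of_le hc, ← integral_const_mul]
  calc ∫ x in Ioc 0 c, exp (-c) * g x
      ≤ ∫ x in Ioc 0 c, exp (-x) * g x := by
        refine setIntegral_mono_on ((hg.1).const_mul _) (hint.mono_set Ioc_subset_Ioi_self)
          measurableSet_Ioc fun x hx => ?_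
        exact mul_le_mul_of_nonneg_right (exp_le_exp.2 (neg_le_neg hx.2)) (hg_nonneg x hx.1)
    _ ≤ ∫ x in Ioi 0, exp (-x) * g x := by
        refine setIntegral_mono_set hint ?_ Ioc_subset_Ioi_self.eventuallyLE
        filter_upwards [self_mem_ae_restrict measurableSet_Ioi] with x (hx : 0 < x)
        exact mul_nonneg (exp_pos _).le (hg_nonneg x hx)

theorem integral_lower_bound (δ c : ℝ) (hδ : 0 < δ) (hc : 0 < c) :
    ∫ x in Set.Ioi (0:ℝ), Real.exp (-x) * (1 + δ * x)⁻¹ ≥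
      Real.exp (-c) * δ⁻¹ * Real.log (1 + δ * c) := by
  have hpos : ∀ x, 0 ≤ x → 0 < 1 + δ * x := fun x hx => by positivity
  rw [mul_assoc, ← intervalIntegral_inv_one_add_mul hδ.ne' (hpos c hc.le)]
  refine exp_neg_mul_intervalIntegral_le_setIntegral_Ioi hc.le
    (fun x hx => (inv_pos.2 (hpos x hx.le)).le) ?_
    (integrableOn_exp_neg_mul_inv_one_add_mul hδ.le)
  refine (ContinuousOn.inv₀ (by fun_prop) fun x hx => ?_).intervalIntegrable
  rw [uIcc_of_le hc.le] at hx
  exact (hpos x hx.1).ne'
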